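/- arXiv:2208.05925 — 4 statements merged into one kernel-verified Lean document; each statement's English description precedes it below -/
import Mathlib

section
/- Anchoring lemma: let F : ℝ^d → ℝ^d be a monotone operator with a zero z*, let λ > 0, z₀ ∈ ℝ^d, and define G(z) = F(z) + λ(z - z₀). Then for any point w, ‖F(w)‖ ≤ 2‖G(w)‖ + λ‖z₀ - z*‖. -/
open RealInnerProductSpace

theorem anchoring_lemma {d : ℕ}
    (F : EuclideanSpace ℝ (Fin d) → EuclideanSpace ℝ (Fin d))
    (hmono : ∀ z z', 0 ≤ ⟪F z - F z', z - z'⟫)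
    (zstar : EuclideanSpace ℝ (Fin d)) (hzstar : F zstar = 0)
    (lam : ℝ) (hlam : 0 < lam) (z₀ : EuclideanSpace ℝ (Fin d))
    (G : EuclideanSpace ℝ (Fin d) → EuclideanSpace ℝ (Fin d))
    (hG : ∀ z, G z = F z + lam • (z - z₀)) :
    ∀ w, ‖F w‖ ≤ 2 * ‖G w‖ + lam * ‖z₀ - zstar‖ := by
  intro w
  have hm : 0 ≤ ⟪F w, w - zstar⟫ := by
    have := hmono w zstar
    rwa [hzstar, sub_zero] at this
  have key : lam • (w - zstar) = (G w - F w) + lam • (z₀ - zstar) := by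
    rw [hG w]; module
  have h1 : 0 ≤ ⟪F w, G w⟫ - ‖F w‖ ^ 2 + lam * ⟪F w, z₀ - zstar⟫ := by
    have h2 : 0 ≤ ⟪F w, lam • (w - zstar)⟫ := by
      rw [real_inner_smul_right]; positivity
    rw [key, inner_add_right, inner_sub_right, real_inner_smul_right,
      real_inner_self_eq_norm_sq] at h2
    linarith
  have hcs1 : ⟪F w, G w⟫ ≤ ‖F w‖ * ‖G w‖ := real_inner_le_norm _ _
  have hcs2 : ⟪F w, z₀ - zstar⟫ ≤ ‖F w‖ * ‖z₀ - zstar‖ := real_inner_le_norm _ _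
  have hsq : ‖F w‖ ^ 2 ≤ ‖F w‖ * (‖G w‖ + lam * ‖z₀ - zstar‖) := by nlinarith
  have hbound : ‖F w‖ ≤ ‖G w‖ + lam * ‖z₀ - zstar‖ := by
    rcases eq_or_lt_of_le (norm_nonneg (F w)) with h | h
    · rw [← h]; positivity
    · nlinarith
  have : (0:ℝ) ≤ ‖G w‖ := norm_nonneg _
  linarith
end

section
/- Consequence of the anchoring lemma: if F is monotone with zero z*, ‖z₀ - z*‖ ≤ D, λ ≤ ε/D, and G(z) = F(z) + λ(z - z₀), then any point w with ‖G(w)‖ ≤ ε satisfies ‖F(w)‖ ≤ 3ε. -/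
open RealInnerProductSpace

theorem anchoring_lemma_consequence {d : ℕ}
    (F : EuclideanSpace ℝ (Fin d) → EuclideanSpace ℝ (Fin d))
    (hmono : ∀ z z', 0 ≤ ⟪F z - F z', z - z'⟫)
    (zstar : EuclideanSpace ℝ (Fin d)) (hzstar : F zstar = 0)
    (D ε : ℝ) (hD : 0 < D) (hε : 0 < ε)
    (z₀ : EuclideanSpace ℝ (Fin d)) (hz₀ : ‖z₀ - zstar‖ ≤ D)
    (lam : ℝ) (hlam : 0 < lam) (hlam' : lam ≤ ε / D)
    (G : EuclideanSpace ℝ (Fin d) → EuclideanSpace ℝ (Fin d))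
    (hG : ∀ z, G z = F z + lam • (z - z₀)) :
    ∀ w, ‖G w‖ ≤ ε → ‖F w‖ ≤ 3 * ε := by
  intro w hw
  set v := w - zstar with hv
  have h1 : (0:ℝ) ≤ ⟪F w, v⟫ := by
    have := hmono w zstar
    simpa [hzstar, hv] using this
  have hGz : G zstar = lam • (zstar - z₀) := by simp [hG, hzstar]
  have hu : G w - G zstar = F w + lam • v := by
    rw [hG, hGz, hv]
    module
  have hFw : F w = (G w - G zstar) - lam • v := by rw [hu]; abel
  have hsq : ‖F w‖^2 ≤ ‖G w - G zstar‖^2 := by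
    rw [hFw, norm_sub_sq_real]
    have hi : ⟪G w - G zstar, lam • v⟫ = lam * ⟪F w, v⟫ + lam^2 * ‖v‖^2 := by
      rw [hu, real_inner_smul_right, inner_add_left, real_inner_smul_left,
        real_inner_self_eq_norm_sq]
      ring
    rw [hi, norm_smul]
    have h2 : (0:ℝ) ≤ lam * ⟪F w, v⟫ := mul_nonneg hlam.le h1
    have habs : |lam| = lam := abs_of_pos hlam
    rw [Real.norm_eq_abs, habs]
    nlinarith [sq_nonneg ‖v‖, sq_nonneg lam]
  have hF : ‖F w‖ ≤ ‖G w - G zstar‖ := by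
    nlinarith [norm_nonneg (F w), norm_nonneg (G w - G zstar)]
  have hGznorm : ‖G zstar‖ ≤ ε := by
    rw [hGz, norm_smul, Real.norm_eq_abs, abs_of_pos hlam]
    have h3 : ‖zstar - z₀‖ = ‖z₀ - zstar‖ := norm_sub_rev _ _
    have h4 : lam * D ≤ ε := by
      calc lam * D ≤ (ε / D) * D := by nlinarith
        _ = ε := div_mul_cancel₀ ε hD.ne'
    calc lam * ‖zstar - z₀‖ ≤ lam * D := by rw [h3]; nlinarith
      _ ≤ ε := h4
  calc ‖F w‖ ≤ ‖G w - G zstar‖ := hF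
    _ ≤ ‖G w‖ + ‖G zstar‖ := norm_sub_le _ _
    _ ≤ ε + ε := add_le_add hw hGznorm
    _ ≤ 3 * ε := by linarith
end

section
/- Chained non-expansiveness: with G_s(z) = F(z) + μ∑_{i=1}^s 2^i (z - z_i) where F is μ-strongly monotone (hence each G_s has a unique zero z_s*), for every s ≥ 1 it holds that ‖z_s* - z_{s-1}*‖ ≤ ‖z_{s-1}* - z_s‖. -/
/-! Adding the anchor `μ 2^s (z - z_s)` to the monotone operator `G_{s-1}` and solving
`G_s = 0` is one resolvent step from `z_s`. Testing the monotonicity of `G_{s-1}` at its zero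
`z_{s-1}*` and at `z_s*` shows that the angle at `z_s*` in the triangle `z_s, z_s*, z_{s-1}*`
is not acute, so the side `z_s* - z_{s-1}*` is at most the side `z_{s-1}* - z_s` opposite it. -/

open RealInnerProductSpace Finset

section

variable {E : Type*} [AddCommGroup E] [Module ℝ E] (F : E → E) (μ : ℝ) (z : ℕ → E)

def anchoredOperator (s : ℕ) (x : E) : E :=
  F x + μ • ∑ i ∈ Icc 1 s, (2 : ℝ) ^ i • (x - z i)

@[simp]
theorem anchoredOperator_zero : anchoredOperator F μ z 0 = F := by
  funext x
  simp [anchoredOperator]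

theorem anchoredOperator_succ (s : ℕ) (x : E) :
    anchoredOperator F μ z (s + 1) x
      = anchoredOperator F μ z s x + (μ * 2 ^ (s + 1)) • (x - z (s + 1)) := by
  rw [anchoredOperator, anchoredOperator, sum_Icc_succ_top (Nat.le_add_left 1 s), smul_add,
    add_assoc, mul_smul]

end

section

variable {E : Type*} [NormedAddCommGroup E] [InnerProductSpace ℝ E]

def IsMonotoneOperator (G : E → E) : Prop :=
  ∀ x y, 0 ≤ ⟪G x - G y, x - y⟫

theorem IsMonotoneOperator.of_strongly_monotone {G : E → E} {μ : ℝ} (hμ : 0 ≤ μ)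
    (hG : ∀ x y, μ * ‖x - y‖ ^ 2 ≤ ⟪G x - G y, x - y⟫) : IsMonotoneOperator G :=
  fun x y => (by positivity : 0 ≤ μ * ‖x - y‖ ^ 2).trans (hG x y)

theorem IsMonotoneOperator.add_smul_sub {G : E → E} (hG : IsMonotoneOperator G) {c : ℝ}
    (hc : 0 ≤ c) (p : E) : IsMonotoneOperator fun x => G x + c • (x - p) := by
  intro x y
  have hsplit : ⟪G x + c • (x - p) - (G y + c • (y - p)), x - y⟫
      = ⟪G x - G y, x - y⟫ + c * ‖x - y‖ ^ 2 := by
    rw [show G x + c • (x - p) - (G y + c • (y - p)) = (G x - G y) + c • (x - y) by module,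
      inner_add_left, real_inner_smul_left, real_inner_self_eq_norm_sq]
  rw [hsplit]
  have := hG x y
  positivity

theorem norm_sub_le_of_inner_nonpos {a b p : E} (h : ⟪a - p, a - b⟫ ≤ 0) :
    ‖a - b‖ ≤ ‖b - p‖ := by
  have hpyth : ‖b - p‖ ^ 2 = ‖a - b‖ ^ 2 - 2 * ⟪a - b, a - p⟫ + ‖a - p‖ ^ 2 := by
    rw [← norm_sub_sq_real, sub_sub_sub_cancel_left, norm_sub_rev]
  rw [real_inner_comm] at h
  refine (pow_le_pow_iff_left₀ (norm_nonneg _) (norm_nonneg _) two_ne_zero).mp ?_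
  rw [hpyth]
  linarith [sq_nonneg ‖a - p‖]

theorem IsMonotoneOperator.norm_sub_le_of_anchor {G : E → E} (hG : IsMonotoneOperator G)
    {c : ℝ} (hc : 0 < c) {a b p : E} (ha : G a + c • (a - p) = 0) (hb : G b = 0) :
    ‖a - b‖ ≤ ‖b - p‖ := by
  have hGa : G a = -(c • (a - p)) := eq_neg_of_add_eq_zero_left ha
  have hmono := hG a b
  rw [hGa, hb, sub_zero, inner_neg_left, real_inner_smul_left] at hmono
  exact norm_sub_le_of_inner_nonpos (nonpos_of_mul_nonpos_right (by linarith) hc)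

theorem isMonotoneOperator_anchoredOperator {F : E → E} (hF : IsMonotoneOperator F) {μ : ℝ}
    (hμ : 0 ≤ μ) (z : ℕ → E) (s : ℕ) : IsMonotoneOperator (anchoredOperator F μ z s) := by
  induction s with
  | zero => simpa using hF
  | succ s ih =>
    simpa only [← anchoredOperator_succ] using
      ih.add_smul_sub (c := μ * 2 ^ (s + 1)) (by positivity) (z (s + 1))

end

theorem chained_nonexpansiveness {d : ℕ} (μ : ℝ) (hμ : 0 < μ)
    (F : EuclideanSpace ℝ (Fin d) → EuclideanSpace ℝ (Fin d))
    (hmono : ∀ z z', μ * ‖z - z'‖ ^ 2 ≤ ⟪F z - F z', z - z'⟫)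
    (z : ℕ → EuclideanSpace ℝ (Fin d))
    (w : ℕ → EuclideanSpace ℝ (Fin d))
    (hw : ∀ s, F (w s) + μ • ∑ i ∈ Finset.Icc 1 s, (2 : ℝ) ^ i • (w s - z i) = 0) :
    ∀ s : ℕ, 1 ≤ s → ‖w s - w (s - 1)‖ ≤ ‖w (s - 1) - z s‖ := by
  intro s hs
  obtain ⟨t, rfl⟩ := Nat.exists_eq_add_of_le' hs
  rw [Nat.add_sub_cancel]
  have hG : IsMonotoneOperator (anchoredOperator F μ z t) :=
    isMonotoneOperator_anchoredOperator (.of_strongly_monotone hμ.le hmono) hμ.le z t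
  refine hG.norm_sub_le_of_anchor (c := μ * 2 ^ (t + 1)) (by positivity) ?_ (hw t)
  rw [← anchoredOperator_succ]
  exact hw (t + 1)
end

section
/- SEG one-step bound (deterministic case): suppose F is μ-strongly monotone and L-Lipschitz with zero z*, 0 < η ≤ 1/(4L). Given z_t, define z_{t+1/2} = z_t - ηF(z_t) and z_{t+1} = z_t - ηF(z_{t+1/2}). Then μ‖z_{t+1/2} - z*‖² ≤ (1/η)(‖z_t - z*‖² - ‖z_{t+1} - z*‖²) - (1/(2η))(‖z_t - z_{t+1/2}‖² + ‖z_{t+1/2} - z_{t+1}‖²). -/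
open RealInnerProductSpace

theorem seg_one_step_deterministic {d : ℕ} (μ L η : ℝ) (hμ : 0 < μ)
    (F : EuclideanSpace ℝ (Fin d) → EuclideanSpace ℝ (Fin d))
    (hmono : ∀ z z', μ * ‖z - z'‖ ^ 2 ≤ ⟪F z - F z', z - z'⟫)
    (hlip : ∀ z z', ‖F z - F z'‖ ≤ L * ‖z - z'‖)
    (zstar : EuclideanSpace ℝ (Fin d)) (hzstar : F zstar = 0)
    (hη : 0 < η) (hη' : η ≤ 1 / (4 * L))
    (zt zh z1 : EuclideanSpace ℝ (Fin d))
    (hzh : zh = zt - η • F zt) (hz1 : z1 = zt - η • F zh) :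
    μ * ‖zh - zstar‖ ^ 2 ≤
      (1 / η) * (‖zt - zstar‖ ^ 2 - ‖z1 - zstar‖ ^ 2)
        - (1 / (2 * η)) * (‖zt - zh‖ ^ 2 + ‖zh - z1‖ ^ 2) := by
  -- L is positive
  have hL : 0 < L := by
    by_contra h
    push_neg at h
    rcases lt_or_eq_of_le h with h | h
    · have : 1 / (4 * L) ≤ 0 := le_of_lt (div_neg_of_pos_of_neg one_pos (by linarith))
      linarith
    · rw [h] at hη'
      norm_num at hη'
      linarith
  -- key step relations
  have h1 : zt - z1 = η • F zh := by rw [hz1]; abel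
  have h2 : zh - z1 = η • (F zh - F zt) := by
    rw [smul_sub, hz1]
    nth_rewrite 1 [hzh]
    abel
  -- three-point identity
  have ident : 2 * ⟪zt - z1, zh - zstar⟫ =
      ‖zt - zstar‖ ^ 2 - ‖z1 - zstar‖ ^ 2 - ‖zt - zh‖ ^ 2 + ‖zh - z1‖ ^ 2 := by
    simp only [norm_sub_sq_real, inner_sub_left, inner_sub_right]
    linear_combination (-2:ℝ) * real_inner_comm zh z1
  -- monotonicity at zh, zstar
  have hm : μ * ‖zh - zstar‖ ^ 2 ≤ ⟪F zh, zh - zstar⟫ := by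
    have := hmono zh zstar
    rwa [hzstar, sub_zero] at this
  have hip : ⟪zt - z1, zh - zstar⟫ = η * ⟪F zh, zh - zstar⟫ := by
    rw [h1, real_inner_smul_left]
  -- Lipschitz bound
  have hb : ‖zh - z1‖ ≤ η * L * ‖zt - zh‖ := by
    rw [h2, norm_smul, Real.norm_eq_abs, abs_of_pos hη, mul_assoc, norm_sub_rev]
    exact mul_le_mul_of_nonneg_left (hlip zt zh) hη.le
  have hbsq : ‖zh - z1‖ ^ 2 ≤ (η * L) ^ 2 * ‖zt - zh‖ ^ 2 := by
    nlinarith [norm_nonneg (zh - z1), norm_nonneg (zt - zh),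
      mul_nonneg (mul_nonneg hη.le hL.le) (norm_nonneg (zt - zh))]
  have hηL : η * L ≤ 1 / 4 := by
    rw [le_div_iff₀ (by linarith : (0:ℝ) < 4 * L)] at hη'
    linarith
  have hηL0 : 0 ≤ η * L := mul_nonneg hη.le hL.le
  have hsq16 : (η * L) ^ 2 ≤ 1 / 16 := by nlinarith
  have h3b : 3 * ‖zh - z1‖ ^ 2 ≤ ‖zt - zh‖ ^ 2 := by
    have hmm : (η * L) ^ 2 * ‖zt - zh‖ ^ 2 ≤ (1 / 16) * ‖zt - zh‖ ^ 2 :=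
      mul_le_mul_of_nonneg_right hsq16 (sq_nonneg _)
    linarith [hbsq, hmm, sq_nonneg ‖zt - zh‖]
  -- combine
  have hX : 0 ≤ μ * ‖zh - zstar‖ ^ 2 := mul_nonneg hμ.le (sq_nonneg _)
  have hηX : 0 ≤ η * (μ * ‖zh - zstar‖ ^ 2) := mul_nonneg hη.le hX
  have h4 : 2 * (η * (μ * ‖zh - zstar‖ ^ 2)) ≤
      ‖zt - zstar‖ ^ 2 - ‖z1 - zstar‖ ^ 2 - ‖zt - zh‖ ^ 2 + ‖zh - z1‖ ^ 2 := by
    rw [← ident, hip]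
    have := mul_le_mul_of_nonneg_left hm hη.le
    linarith
  have key : η * (μ * ‖zh - zstar‖ ^ 2) ≤
      (‖zt - zstar‖ ^ 2 - ‖z1 - zstar‖ ^ 2)
        - (‖zt - zh‖ ^ 2 + ‖zh - z1‖ ^ 2) / 2 := by linarith
  -- pure real arithmetic finish
  have main : ∀ X Δ B : ℝ, 0 ≤ X → η * X ≤ Δ - B / 2 →
      X ≤ (1 / η) * Δ - (1 / (2 * η)) * B := by
    intro X Δ B hX0 hkey
    have heq : (1 / η) * Δ - (1 / (2 * η)) * B = (Δ - B / 2) / η := by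
      field_simp
    rw [heq, le_div_iff₀ hη]
    linarith [hkey]
  exact main _ _ _ (mul_nonneg hμ.le (sq_nonneg _)) key
end
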